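/- arXiv:1712.02667 — 2 statements merged into one kernel-verified Lean document; each statement's English description precedes it below -/
import Mathlib

section
/- Among all Dyck paths from (0,0) to (n+2k, n), the path P = (10)^k 1^n (k up-down pairs followed by n up-steps) has the unique maximum comajor index, equal to k(n+k). -/
def IsDyckWord (w : List Bool) : Prop :=
  ∀ p : List Bool, p <+: w → p.count false ≤ p.count true

def EndsAt (w : List Bool) (n : ℕ) : Prop :=
  w.count true = w.count false + n

def descents (w : List Bool) : Finset ℕ :=
  (Finset.Ico 1 w.length).filter
    (fun i => w.getD (i - 1) false = true ∧ w.getD i false = false)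

def comaj (w : List Bool) : ℕ := ∑ i ∈ descents w, (w.length - i)

/-!
The down-steps of a Dyck path with `k` down-steps sit at (0-indexed) positions
`i₁ < ⋯ < iₖ` with `i_j ≥ 2j - 1`, since a prefix never has more down- than up-steps; hence
`∑ i_j ≥ k²`. Every descent ends at a down-step, so for a path of length `s = n + 2k`,
`comaj ≤ ∑ (s - i_j) = ks - ∑ i_j ≤ ks - k² = k(n + k)`. Equality forces `i_j = 2j - 1` for
all `j`, and a word is determined by its down-step positions, which gives uniqueness.
-/

open Finset

def odds (k : ℕ) : Finset ℕ := (range k).image (fun j => 2 * j + 1)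

lemma mem_odds {i k : ℕ} : i ∈ odds k ↔ i < 2 * k ∧ i % 2 = 1 := by
  simp only [odds, mem_image, mem_range]
  constructor
  · rintro ⟨j, hj, rfl⟩
    omega
  · exact fun h => ⟨i / 2, by omega, by omega⟩

lemma odds_succ (k : ℕ) : odds (k + 1) = insert (2 * k + 1) (odds k) := by
  rw [odds, range_add_one, image_insert, odds]

lemma sum_odds (k : ℕ) : ∑ i ∈ odds k, i = k ^ 2 := by
  induction k with
  | zero => rfl
  | succ k ih =>
    rw [odds_succ, sum_insert (by simp [mem_odds]), ih]
    ring

/-- The `j`-th smallest element of `F` is at least `2j - 1`, as for the down-step positions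
of a Dyck path. -/
def IsBallotSet (F : Finset ℕ) : Prop := ∀ i ∈ F, 2 * #{j ∈ F | j ≤ i} ≤ i + 1

lemma IsBallotSet.of_insert_max {a : ℕ} {s : Finset ℕ} (h : IsBallotSet (insert a s))
    (ha : ∀ x ∈ s, x < a) : IsBallotSet s ∧ 2 * #s + 1 ≤ a := by
  have hna : a ∉ s := fun h => lt_irrefl a (ha a h)
  constructor
  · intro i hi
    have := h i (mem_insert_of_mem hi)
    rwa [filter_insert, if_neg (ha i hi).not_ge] at this
  · have := h a (mem_insert_self a s)
    rw [filter_true_of_mem fun x hx => (mem_insert.1 hx).elim le_of_eq fun hx => (ha x hx).le,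
      card_insert_of_notMem hna] at this
    omega

lemma IsBallotSet.sq_card_le_sum {F : Finset ℕ} (h : IsBallotSet F) : #F ^ 2 ≤ ∑ i ∈ F, i := by
  induction F using Finset.induction_on_max with
  | empty => simp
  | insert a s ha ih =>
    obtain ⟨hs, has⟩ := h.of_insert_max ha
    have hna : a ∉ s := fun h => lt_irrefl a (ha a h)
    rw [card_insert_of_notMem hna, sum_insert hna]
    nlinarith [ih hs]

lemma IsBallotSet.eq_odds_of_sum_eq {F : Finset ℕ} (h : IsBallotSet F)
    (hsum : ∑ i ∈ F, i = #F ^ 2) : F = odds #F := by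
  induction F using Finset.induction_on_max with
  | empty => rfl
  | insert a s ha ih =>
    obtain ⟨hs, has⟩ := h.of_insert_max ha
    have hna : a ∉ s := fun h => lt_irrefl a (ha a h)
    rw [card_insert_of_notMem hna, sum_insert hna] at hsum
    rw [card_insert_of_notMem hna]
    have hle := hs.sq_card_le_sum
    have ha' : a = 2 * #s + 1 := by nlinarith
    rw [odds_succ, ← ha', ← ih hs (by nlinarith)]

def downSteps (w : List Bool) : Finset ℕ := {i ∈ range w.length | w.getD i false = false}

lemma mem_downSteps {w : List Bool} {i : ℕ} :
    i ∈ downSteps w ↔ i < w.length ∧ w.getD i false = false := by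
  rw [downSteps, mem_filter, mem_range]

lemma descents_subset_downSteps (w : List Bool) : descents w ⊆ downSteps w := by
  intro i hi
  rw [descents, mem_filter, mem_Ico] at hi
  exact mem_downSteps.2 ⟨hi.1.2, hi.2.2⟩

lemma filter_lt_downSteps (w : List Bool) (m : ℕ) :
    {i ∈ downSteps w | i < m} = downSteps (w.take m) := by
  ext i
  simp only [mem_filter, mem_downSteps, List.length_take, List.getD_eq_getElem?_getD,
    List.getElem?_take]
  by_cases hi : i < m <;> simp [hi]

lemma card_downSteps (w : List Bool) : #(downSteps w) = w.count false := by
  induction w using List.reverseRecOn with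
  | nil => rfl
  | append_singleton w a ih =>
    have hinit : {i ∈ range w.length | (w ++ [a]).getD i false = false} = downSteps w :=
      filter_congr fun i hi => by rw [List.getD_append _ _ _ _ (mem_range.1 hi)]
    rw [downSteps, List.length_append, List.length_singleton, range_add_one, filter_insert, hinit]
    cases a <;> simp [ih, mem_downSteps]

lemma eq_of_downSteps_eq {v w : List Bool} (hl : v.length = w.length)
    (h : downSteps v = downSteps w) : v = w := by
  refine List.ext_getElem hl fun i hv hw => ?_
  have := congrArg (i ∈ ·) h
  simp only [mem_downSteps, hv, hw, true_and, List.getD_eq_getElem _ _ hv,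
    List.getD_eq_getElem _ _ hw, eq_iff_iff] at this
  cases hv' : v[i] <;> cases hw' : w[i] <;> simp_all

lemma sum_downSteps_tsub_add_sum (w : List Bool) :
    ∑ i ∈ downSteps w, (w.length - i) + ∑ i ∈ downSteps w, i = w.count false * w.length := by
  rw [← sum_add_distrib, ← card_downSteps, ← smul_eq_mul, ← sum_const]
  exact sum_congr rfl fun i hi => Nat.sub_add_cancel (mem_downSteps.1 hi).1.le

lemma IsDyckWord.isBallotSet_downSteps {w : List Bool} (hD : IsDyckWord w) :
    IsBallotSet (downSteps w) := by
  intro i hi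
  have hprefix : {j ∈ downSteps w | j ≤ i} = downSteps (w.take (i + 1)) := by
    simp only [← Nat.lt_succ_iff, filter_lt_downSteps]
  have hlen : (w.take (i + 1)).length = i + 1 := by
    simp only [List.length_take]
    have := (mem_downSteps.1 hi).1
    omega
  have hcount := List.count_false_add_count_true (w.take (i + 1))
  have hdyck := hD _ (w.take_prefix (i + 1))
  rw [hprefix, card_downSteps]
  omega

lemma comaj_add_sum_downSteps_le (w : List Bool) :
    comaj w + ∑ i ∈ downSteps w, i ≤ w.count false * w.length :=
  sum_downSteps_tsub_add_sum w ▸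
    Nat.add_le_add_right (sum_le_sum_of_subset (descents_subset_downSteps w)) _

lemma IsDyckWord.comaj_add_sq_le {w : List Bool} (hD : IsDyckWord w) :
    comaj w + w.count false ^ 2 ≤ w.count false * w.length := by
  have hsq := hD.isBallotSet_downSteps.sq_card_le_sum
  rw [card_downSteps] at hsq
  have := comaj_add_sum_downSteps_le w
  omega

lemma IsDyckWord.downSteps_eq_odds {w : List Bool} (hD : IsDyckWord w)
    (h : comaj w + w.count false ^ 2 = w.count false * w.length) :
    downSteps w = odds (w.count false) := by
  have hballot := hD.isBallotSet_downSteps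
  have hsq := hballot.sq_card_le_sum
  have := comaj_add_sum_downSteps_le w
  rw [card_downSteps] at hsq
  rw [← card_downSteps]
  exact hballot.eq_odds_of_sum_eq (by rw [card_downSteps]; omega)

def zigzag (k n : ℕ) : List Bool := (List.replicate k [true, false]).flatten ++ List.replicate n true

lemma zigzag_succ (k n : ℕ) : zigzag (k + 1) n = true :: false :: zigzag k n := by
  simp [zigzag, List.replicate_succ]

lemma zigzag_zero (n : ℕ) : zigzag 0 n = List.replicate n true := rfl

lemma zigzag_length (k n : ℕ) : (zigzag k n).length = n + 2 * k := by
  induction k with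
  | zero => simp [zigzag_zero]
  | succ k ih => rw [zigzag_succ, List.length_cons, List.length_cons, ih]; ring

lemma count_false_zigzag (k n : ℕ) : (zigzag k n).count false = k := by
  induction k with
  | zero => simp [zigzag_zero, List.count_replicate]
  | succ k ih => simp [zigzag_succ, ih]

lemma count_true_zigzag (k n : ℕ) : (zigzag k n).count true = k + n := by
  induction k with
  | zero => simp [zigzag_zero]
  | succ k ih => simp [zigzag_succ, ih, Nat.add_right_comm]

lemma endsAt_zigzag (k n : ℕ) : EndsAt (zigzag k n) n := by
  rw [EndsAt, count_false_zigzag, count_true_zigzag]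

lemma IsDyckWord.cons_true_cons_false {w : List Bool} (h : IsDyckWord w) :
    IsDyckWord (true :: false :: w) := by
  rintro (_ | ⟨a, _ | ⟨b, p⟩⟩) hp
  · simp
  · obtain ⟨rfl, -⟩ := List.cons_prefix_cons.1 hp
    simp
  · obtain ⟨rfl, rfl, hpw⟩ : a = true ∧ b = false ∧ p <+: w := by
      simpa only [List.cons_prefix_cons] using hp
    simpa [List.count_cons] using h p hpw

lemma isDyckWord_replicate_true (n : ℕ) : IsDyckWord (List.replicate n true) := by
  intro p hp
  have := hp.sublist.count_le false
  rw [List.count_replicate] at this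
  simp only [Bool.true_beq, Bool.false_eq_true, if_false, Nat.le_zero] at this
  simp [this]

lemma isDyckWord_zigzag (k n : ℕ) : IsDyckWord (zigzag k n) := by
  induction k with
  | zero => exact isDyckWord_replicate_true n
  | succ k ih => rw [zigzag_succ]; exact ih.cons_true_cons_false

lemma zigzag_getD_eq_false_iff {k n i : ℕ} (hi : i < n + 2 * k) :
    (zigzag k n).getD i false = false ↔ i ∈ odds k := by
  induction k generalizing i with
  | zero =>
    rw [zigzag_zero, List.getD_replicate _ (by omega)]
    simp [odds]
  | succ k ih =>
    rw [zigzag_succ]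
    rcases i with _ | _ | i
    · rw [List.getD_cons_zero, mem_odds]
      simp
    · rw [List.getD_cons_succ, List.getD_cons_zero, mem_odds]
      exact iff_of_true rfl (by omega)
    · rw [List.getD_cons_succ, List.getD_cons_succ, ih (by omega), mem_odds, mem_odds]
      omega

lemma downSteps_zigzag (k n : ℕ) : downSteps (zigzag k n) = odds k := by
  ext i
  rw [mem_downSteps, zigzag_length]
  constructor
  · rintro ⟨hi, h⟩
    exact (zigzag_getD_eq_false_iff hi).1 h
  · intro h
    have hi : i < n + 2 * k := by have := mem_odds.1 h; omega
    exact ⟨hi, (zigzag_getD_eq_false_iff hi).2 h⟩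

lemma descents_zigzag (k n : ℕ) : descents (zigzag k n) = odds k := by
  refine (downSteps_zigzag k n ▸ descents_subset_downSteps _).antisymm fun i hi => ?_
  obtain ⟨hi2k, hodd⟩ := mem_odds.1 hi
  have hlt : i < n + 2 * k := by omega
  rw [descents, mem_filter, mem_Ico, zigzag_length, zigzag_getD_eq_false_iff hlt,
    ← Bool.not_eq_false, zigzag_getD_eq_false_iff (by omega)]
  simp only [mem_odds]
  omega

lemma comaj_zigzag (k n : ℕ) : comaj (zigzag k n) = k * (n + k) := by
  have h := sum_downSteps_tsub_add_sum (zigzag k n)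
  rw [downSteps_zigzag, sum_odds, count_false_zigzag, zigzag_length] at h
  rw [comaj, descents_zigzag, zigzag_length]
  nlinarith

/-- Among all Dyck paths from (0,0) to (n+2k, n), the path
`P = (10)^k 1^n` has the unique maximum comajor index, equal to `k(n+k)`. -/
theorem stmt3 (n k : ℕ) :
    let P : List Bool := (List.replicate k [true, false]).flatten ++ List.replicate n true
    IsDyckWord P ∧ P.length = n + 2 * k ∧ EndsAt P n ∧ comaj P = k * (n + k) ∧
    ∀ Q : List Bool, IsDyckWord Q → Q.length = n + 2 * k → EndsAt Q n → Q ≠ P →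
      comaj Q < k * (n + k) := by
  intro P
  refine ⟨isDyckWord_zigzag k n, zigzag_length k n, endsAt_zigzag k n, comaj_zigzag k n, ?_⟩
  intro Q hQ hl hE hne
  have hk : Q.count false = k := by
    have := List.count_true_add_count_false Q
    rw [EndsAt] at hE
    omega
  have hbound := hQ.comaj_add_sq_le
  rw [hk, hl] at hbound
  refine lt_of_le_of_ne (by nlinarith) fun heq => hne (eq_of_downSteps_eq ?_ ?_)
  · exact hl.trans (zigzag_length k n).symm
  · rw [hQ.downSteps_eq_odds (by rw [hk, hl, heq]; ring), hk, ← downSteps_zigzag k n]; rfl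
end

section
/- Let G_n^m(x) = Σ_{s≥0} |D_n^m(s)| x^{(s-n)/2} (as a formal power series, summing over s with s ≡ n mod 2), where D_n^m(s) is the set of Dyck paths from (0,0) to (s,n) that never go above the line y = m. Then for 0 ≤ n ≤ m, G_n^m(x) · p_{m+1}(x) = p_{m-n}(x), where p_k(x) = Σ_{s=0}^{⌊k/2⌋} (-1)^s C(k-s,s) x^s. -/
/-- The path never goes above the line `y = m`. -/
def BoundedBy (w : List Bool) (m : ℕ) : Prop :=
  ∀ p : List Bool, p <+: w → p.count true ≤ p.count false + m

/-- `p_k` as a power series: `p_k(x) = Σ_{s=0}^{⌊k/2⌋} (-1)^s C(k-s,s) x^s`. -/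
noncomputable def pSeries (k : ℕ) : PowerSeries ℤ :=
  PowerSeries.mk fun s => if s ≤ k / 2 then (-1) ^ s * ((k - s).choose s : ℤ) else 0

/-- The generating series `G_n^m(x) = Σ_j |D_n^m(n+2j)| x^j` of Dyck paths
ending at height `n` and bounded above by `y = m`. -/
noncomputable def G (m n : ℕ) : PowerSeries ℤ :=
  PowerSeries.mk fun j =>
    ({w : List Bool | IsDyckWord w ∧ w.length = n + 2 * j ∧ EndsAt w n ∧
        BoundedBy w m}.ncard : ℤ)

open PowerSeries

lemma ncard_eq_ncard_preimage_append_true_add_false (S : Set (List Bool)) (hS : S.Finite)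
    (hnil : [] ∉ S) :
    S.ncard = ((· ++ [true]) ⁻¹' S).ncard + ((· ++ [false]) ⁻¹' S).ncard := by
  have hinj (b : Bool) : Function.Injective (· ++ [b]) := List.append_left_injective [b]
  have hsplit : S = (· ++ [true]) '' ((· ++ [true]) ⁻¹' S) ∪
      (· ++ [false]) '' ((· ++ [false]) ⁻¹' S) := by
    ext v
    rcases v.eq_nil_or_concat' with rfl | ⟨w, b, rfl⟩
    · simp [hnil]
    · cases b <;> simp [(hinj _).eq_iff]
  have hdisj : Disjoint ((· ++ [true]) '' ((· ++ [true]) ⁻¹' S))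
      ((· ++ [false]) '' ((· ++ [false]) ⁻¹' S)) := by
    simp [Set.disjoint_left]
  have hfin (b : Bool) : ((· ++ [b]) ⁻¹' S).Finite := hS.preimage (hinj b).injOn
  rw [congrArg Set.ncard hsplit, Set.ncard_union_eq hdisj ((hfin _).image _) ((hfin _).image _),
    (hinj _).injOn.ncard_image, (hinj _).injOn.ncard_image]

lemma forall_prefix_append_singleton {α : Type*} {P : List α → Prop} {w : List α} {b : α} :
    (∀ p, p <+: w ++ [b] → P p) ↔ (∀ p, p <+: w → P p) ∧ P (w ++ [b]) := by
  simp only [List.prefix_concat_iff, or_imp, forall_and, forall_eq]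
  exact and_comm

lemma IsDyckWord.count_false_le {w : List Bool} (hw : IsDyckWord w) :
    w.count false ≤ w.count true :=
  hw w (List.prefix_refl w)

lemma BoundedBy.count_true_le {w : List Bool} {m : ℕ} (hw : BoundedBy w m) :
    w.count true ≤ w.count false + m :=
  hw w (List.prefix_refl w)

lemma isDyckWord_append_singleton {w : List Bool} {b : Bool} :
    IsDyckWord (w ++ [b]) ↔
      IsDyckWord w ∧ (w ++ [b]).count false ≤ (w ++ [b]).count true :=
  forall_prefix_append_singleton

lemma boundedBy_append_singleton {w : List Bool} {b : Bool} {m : ℕ} :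
    BoundedBy (w ++ [b]) m ↔
      BoundedBy w m ∧ (w ++ [b]).count true ≤ (w ++ [b]).count false + m :=
  forall_prefix_append_singleton

def boundedDyckPaths (m n ℓ : ℕ) : Set (List Bool) :=
  {w | IsDyckWord w ∧ w.length = ℓ ∧ EndsAt w n ∧ BoundedBy w m}

lemma coeff_G (m n j : ℕ) : coeff j (G m n) = ((boundedDyckPaths m n (n + 2 * j)).ncard : ℤ) := by
  rw [G, coeff_mk, boundedDyckPaths]

lemma boundedDyckPaths_finite (m n ℓ : ℕ) : (boundedDyckPaths m n ℓ).Finite :=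
  (List.finite_length_eq Bool ℓ).subset fun _ hw => hw.2.1

lemma boundedDyckPaths_eq_empty_of_lt {m n ℓ : ℕ} (h : m < n ∨ ℓ < n) :
    boundedDyckPaths m n ℓ = ∅ := by
  refine Set.eq_empty_of_forall_notMem fun w ⟨_, hl, he, hb⟩ => ?_
  have := hb.count_true_le
  have : w.count true ≤ w.length := List.count_le_length
  unfold EndsAt at he
  omega

lemma boundedDyckPaths_zero_zero (m : ℕ) : boundedDyckPaths m 0 0 = {[]} := by
  ext w
  constructor
  · exact fun hw => List.length_eq_zero_iff.mp hw.2.1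
  · rintro rfl
    simp [boundedDyckPaths, IsDyckWord, BoundedBy, EndsAt]

lemma preimage_append_false_boundedDyckPaths (m n ℓ : ℕ) :
    (· ++ [false]) ⁻¹' boundedDyckPaths m n (ℓ + 1) = boundedDyckPaths m (n + 1) ℓ := by
  ext w
  have hct : (w ++ [false]).count true = w.count true := by simp
  have hcf : (w ++ [false]).count false = w.count false + 1 := by simp
  simp only [boundedDyckPaths, Set.mem_preimage, Set.mem_ofPred_eq, isDyckWord_append_singleton,
    boundedBy_append_singleton, EndsAt, List.length_append, List.length_singleton, hct, hcf]
  constructor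
  · rintro ⟨⟨hd, -⟩, hl, he, hb, -⟩
    exact ⟨hd, by omega, by omega, hb⟩
  · rintro ⟨hd, hl, he, hb⟩
    have := hb.count_true_le
    exact ⟨⟨hd, by omega⟩, by omega, by omega, hb, by omega⟩

lemma preimage_append_true_boundedDyckPaths {m n : ℕ} (h : n < m) (ℓ : ℕ) :
    (· ++ [true]) ⁻¹' boundedDyckPaths m (n + 1) (ℓ + 1) = boundedDyckPaths m n ℓ := by
  ext w
  have hct : (w ++ [true]).count true = w.count true + 1 := by simp
  have hcf : (w ++ [true]).count false = w.count false := by simp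
  simp only [boundedDyckPaths, Set.mem_preimage, Set.mem_ofPred_eq, isDyckWord_append_singleton,
    boundedBy_append_singleton, EndsAt, List.length_append, List.length_singleton, hct, hcf]
  constructor
  · rintro ⟨⟨hd, -⟩, hl, he, hb, -⟩
    exact ⟨hd, by omega, by omega, hb⟩
  · rintro ⟨hd, hl, he, hb⟩
    have := hd.count_false_le
    exact ⟨⟨hd, by omega⟩, by omega, by omega, hb, by omega⟩

lemma preimage_append_true_boundedDyckPaths_zero (m ℓ : ℕ) :
    (· ++ [true]) ⁻¹' boundedDyckPaths m 0 (ℓ + 1) = ∅ := by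
  refine Set.eq_empty_of_forall_notMem fun w ⟨hd, _, he, _⟩ => ?_
  have := (isDyckWord_append_singleton.mp hd).1.count_false_le
  have hct : (w ++ [true]).count true = w.count true + 1 := by simp
  have hcf : (w ++ [true]).count false = w.count false := by simp
  rw [EndsAt, hct, hcf] at he
  omega

lemma ncard_boundedDyckPaths_succ (m n ℓ : ℕ) :
    (boundedDyckPaths m n (ℓ + 1)).ncard =
      ((· ++ [true]) ⁻¹' boundedDyckPaths m n (ℓ + 1)).ncard +
        (boundedDyckPaths m (n + 1) ℓ).ncard := by
  rw [ncard_eq_ncard_preimage_append_true_add_false _ (boundedDyckPaths_finite m n (ℓ + 1))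
    fun h => absurd h.2.1 (by simp), preimage_append_false_boundedDyckPaths]

lemma G_eq_zero_of_lt {m n : ℕ} (h : m < n) : G m n = 0 := by
  ext j
  simp [coeff_G, boundedDyckPaths_eq_empty_of_lt (Or.inl h)]

lemma G_zero (m : ℕ) : G m 0 = 1 + X * G m 1 := by
  ext (_ | j)
  · simp [coeff_G, boundedDyckPaths_zero_zero]
  · rw [map_add, coeff_succ_X_mul, coeff_G, coeff_G, coeff_one, if_neg j.succ_ne_zero,
      show 0 + 2 * (j + 1) = 1 + 2 * j + 1 by ring, ncard_boundedDyckPaths_succ,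
      preimage_append_true_boundedDyckPaths_zero]
    simp

lemma G_succ {m n : ℕ} (h : n < m) : G m (n + 1) = G m n + X * G m (n + 2) := by
  ext j
  rw [map_add, coeff_G, coeff_G, show n + 1 + 2 * j = n + 2 * j + 1 by ring,
    ncard_boundedDyckPaths_succ, preimage_append_true_boundedDyckPaths h, Nat.cast_add,
    add_right_inj]
  rcases j with _ | j
  · simp [boundedDyckPaths_eq_empty_of_lt]
  · rw [coeff_succ_X_mul, coeff_G, show n + 2 * (j + 1) = n + 2 + 2 * j by ring]

lemma coeff_pSeries (k s : ℕ) : coeff s (pSeries k) = (-1) ^ s * ((k - s).choose s : ℤ) := by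
  rw [pSeries, coeff_mk, ite_eq_left_iff]
  intro hs
  rw [Nat.choose_eq_zero_of_lt (by omega), Nat.cast_zero, mul_zero]

lemma pSeries_of_le_one {k : ℕ} (hk : k ≤ 1) : pSeries k = 1 := by
  ext (_ | s)
  · simp [coeff_pSeries]
  · simp [coeff_pSeries, Nat.choose_eq_zero_of_lt (show k - (s + 1) < s + 1 by omega)]

lemma pSeries_add_two (k : ℕ) : pSeries (k + 2) = pSeries (k + 1) - X * pSeries k := by
  ext (_ | s)
  · simp [coeff_pSeries, map_sub, coeff_zero_X_mul]
  have pascal : (k + 1 - s).choose (s + 1) = (k - s).choose (s + 1) + (k - s).choose s := by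
    rcases le_or_gt s k with hs | hs
    · rw [show k + 1 - s = k - s + 1 by omega, Nat.choose_succ_succ', add_comm]
    · simp [show k + 1 - s = 0 by omega, show k - s = 0 by omega,
        Nat.choose_eq_zero_of_lt (show 0 < s by omega)]
  rw [map_sub, coeff_succ_X_mul, coeff_pSeries, coeff_pSeries, coeff_pSeries,
    show k + 2 - (s + 1) = k + 1 - s by omega, show k + 1 - (s + 1) = k - s by omega, pascal]
  push_cast
  ring

lemma pSeries_ne_zero (k : ℕ) : pSeries k ≠ 0 := fun h => by
  simpa [coeff_pSeries] using congrArg (coeff 0) h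

lemma eq_pSeries_mul_of_recurrence {a : ℕ → ℤ⟦X⟧} {m t : ℕ}
    (hrec : ∀ n < m, a (n + 1) = a n + X * a (n + 2)) (htop : a (m + 1) = 0) (ht : t ≤ m) :
    a t = pSeries (m - t) * a m := by
  suffices h : ∀ k t, t + k = m → a t = pSeries k * a m from h _ _ (by omega)
  intro k
  induction k using Nat.twoStepInduction with
  | zero =>
    rintro t rfl
    rw [pSeries_of_le_one zero_le_one, one_mul, add_zero]
  | one =>
    rintro t rfl
    rw [pSeries_of_le_one le_rfl, one_mul, hrec t (by omega), htop, mul_zero, add_zero]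
  | more k ih ih1 =>
    rintro t rfl
    have step := hrec t (by omega)
    rw [ih1 (t + 1) (by omega), ih (t + 2) (by omega)] at step
    rw [pSeries_add_two]
    linear_combination -step

lemma mul_pSeries_eq_of_recurrence {a : ℕ → ℤ⟦X⟧} {m n : ℕ} (h0 : a 0 = 1 + X * a 1)
    (hrec : ∀ n < m, a (n + 1) = a n + X * a (n + 2)) (htop : a (m + 1) = 0) (hn : n ≤ m) :
    a n * pSeries (m + 1) = pSeries (m - n) := by
  -- `b k` is `a (k - 1) * p_{m+1}`, with `a (-1) = 1` so that `h0` becomes an instance of `hrec`.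
  let b : ℕ → ℤ⟦X⟧ := fun
    | 0 => pSeries (m + 1)
    | k + 1 => a k * pSeries (m + 1)
  have hb : ∀ t ≤ m + 1, b t = pSeries (m + 1 - t) * b (m + 1) := by
    refine fun t ht => eq_pSeries_mul_of_recurrence ?_ (by simp [b, htop]) ht
    rintro (_ | k) hk
    · simp only [b, h0]
      ring
    · simp only [b, hrec k (by omega)]
      ring
  have hE : b (m + 1) = 1 :=
    mul_left_cancel₀ (pSeries_ne_zero (m + 1)) (by simpa using (hb 0 (by omega)).symm)
  simpa [b, hE] using hb (n + 1) (by omega)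

/-- For 0 ≤ n ≤ m, `G_n^m(x) · p_{m+1}(x) = p_{m-n}(x)`. -/
theorem stmt7 (m n : ℕ) (h : n ≤ m) :
    G m n * pSeries (m + 1) = pSeries (m - n) :=
  mul_pSeries_eq_of_recurrence (G_zero m) (fun _ hn => G_succ hn)
    (G_eq_zero_of_lt (Nat.lt_succ_self m)) h
end
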